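/- arXiv:2503.19294 — 2 statements merged into one kernel-verified Lean document; each statement's English description precedes it below -/
import Mathlib

section
/- Under the conditions of the previous statement, the variance of the sample covariance satisfies Var(Ĉ) ≤ (M−1)⁻¹ √(M₄(W) M₄(W')), where M₄(W) and M₄(W') are the fourth central moments of W and W'. -/
open MeasureTheory ProbabilityTheory
open Finset Filter
open scoped ENNReal NNReal
open MeasureTheory ProbabilityTheory Finset Filter
open scoped ENNReal NNReal

set_option linter.unusedSectionVars false
section AUX
variable {Ω : Type*} [MeasurableSpace Ω] {μ : Measure Ω} [IsProbabilityMeasure μ]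

lemma aux_indep_prod {ι : Type*} {X : ι → Ω → ℝ}
    (hind : iIndepFun X μ)
    (hXm : ∀ i, Measurable (X i)) (s : Finset ι) (hint : ∀ i ∈ s, Integrable (X i) μ) :
    Integrable (fun ω => ∏ i ∈ s, X i ω) μ ∧
      (∫ ω, ∏ i ∈ s, X i ω ∂μ) = ∏ i ∈ s, ∫ ω, X i ω ∂μ := by
  classical
  induction s using Finset.cons_induction with
  | empty => simp [integrable_const]
  | cons i s hi ih =>
    have hints : ∀ j ∈ s, Integrable (X j) μ := fun j hj => hint j (Finset.mem_cons_of_mem hj)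
    obtain ⟨ihint, ihval⟩ := ih hints
    have hindep2 : IndepFun (fun ω => ∏ j ∈ s, X j ω) (X i) μ := by
      have := hind.indepFun_finsetProd_of_notMem hXm hi
      convert this using 1
      ext ω; simp
    have hXi : Integrable (X i) μ := hint i (Finset.mem_cons_self i s)
    have hmul : Integrable (fun ω => (∏ j ∈ s, X j ω) * X i ω) μ := by
      have := hindep2.integrable_mul ihint hXi
      exact this
    constructor
    · simp only [Finset.prod_cons]
      have : (fun ω => X i ω * ∏ j ∈ s, X j ω) = fun ω => (∏ j ∈ s, X j ω) * X i ω := by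
        ext ω; ring
      rw [this]; exact hmul
    · simp only [Finset.prod_cons]
      have h1 : (fun ω => X i ω * ∏ j ∈ s, X j ω) = fun ω => (∏ j ∈ s, X j ω) * X i ω := by
        ext ω; ring
      calc ∫ ω, X i ω * ∏ j ∈ s, X j ω ∂μ = ∫ ω, (∏ j ∈ s, X j ω) * X i ω ∂μ := by rw [h1]
        _ = (∫ ω, ∏ j ∈ s, X j ω ∂μ) * ∫ ω, X i ω ∂μ :=
            hindep2.integral_mul_eq_mul_integral ihint.aestronglyMeasurable hXi.aestronglyMeasurable
        _ = _ := by rw [ihval]; ring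

variable {M : ℕ} {V : Fin M → Ω → ℝ × ℝ}

lemma aux_prod2
    (hindep : iIndepFun V μ)
    {i j : Fin M} (hij : i ≠ j) {φ ψ : ℝ × ℝ → ℝ}
    (hφ : Measurable φ) (hψ : Measurable ψ)
    (hφi : Integrable (fun ω => φ (V i ω)) μ) (hψj : Integrable (fun ω => ψ (V j ω)) μ) :
    Integrable (fun ω => φ (V i ω) * ψ (V j ω)) μ ∧
      ∫ ω, φ (V i ω) * ψ (V j ω) ∂μ = (∫ ω, φ (V i ω) ∂μ) * ∫ ω, ψ (V j ω) ∂μ := by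
  have hIF : IndepFun (fun ω => φ (V i ω)) (fun ω => ψ (V j ω)) μ := by
    have := (hindep.indepFun hij).comp hφ hψ
    exact this
  exact ⟨hIF.integrable_mul hφi hψj,
    hIF.integral_mul_eq_mul_integral hφi.aestronglyMeasurable hψj.aestronglyMeasurable⟩

lemma aux_prod3 (hmeas : ∀ m, Measurable (V m))
    (hindep : iIndepFun V μ)
    {i j k : Fin M} (hij : i ≠ j) (hik : i ≠ k) (hjk : j ≠ k)
    {φ ψ χ : ℝ × ℝ → ℝ} (hφ : Measurable φ) (hψ : Measurable ψ) (hχ : Measurable χ)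
    (hφi : Integrable (fun ω => φ (V i ω)) μ) (hψj : Integrable (fun ω => ψ (V j ω)) μ)
    (hχk : Integrable (fun ω => χ (V k ω)) μ) :
    Integrable (fun ω => φ (V i ω) * ψ (V j ω) * χ (V k ω)) μ ∧
      ∫ ω, φ (V i ω) * ψ (V j ω) * χ (V k ω) ∂μ
        = (∫ ω, φ (V i ω) ∂μ) * (∫ ω, ψ (V j ω) ∂μ) * ∫ ω, χ (V k ω) ∂μ := by
  classical
  set Ψ : Fin M → ℝ × ℝ → ℝ := fun m => if m = i then φ else if m = j then ψ else χ with hΨ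
  have hΨm : ∀ m, Measurable (Ψ m) := by
    intro m; simp only [hΨ]; split_ifs <;> assumption
  have hind : iIndepFun
      (fun m => fun ω => Ψ m (V m ω)) μ := by
    have := hindep.comp Ψ hΨm
    exact this
  have hXm : ∀ m, Measurable (fun ω => Ψ m (V m ω)) := fun m => (hΨm m).comp (hmeas m)
  have hs : ({i, j, k} : Finset (Fin M)) = insert i (insert j ({k} : Finset (Fin M))) := rfl
  have hΨi : Ψ i = φ := by simp [hΨ]
  have hΨj : Ψ j = ψ := by simp [hΨ, hij.symm]
  have hΨk : Ψ k = χ := by simp [hΨ, hik.symm, hjk.symm]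
  have hint : ∀ m ∈ ({i, j, k} : Finset (Fin M)), Integrable (fun ω => Ψ m (V m ω)) μ := by
    intro m hm
    simp only [Finset.mem_insert, Finset.mem_singleton] at hm
    rcases hm with rfl | rfl | rfl
    · rw [hΨi]; exact hφi
    · rw [hΨj]; exact hψj
    · rw [hΨk]; exact hχk
  obtain ⟨h1, h2⟩ := aux_indep_prod hind hXm {i, j, k} hint
  have hprod : ∀ ω, (∏ m ∈ ({i, j, k} : Finset (Fin M)), Ψ m (V m ω))
      = φ (V i ω) * ψ (V j ω) * χ (V k ω) := by
    intro ω
    rw [hs, Finset.prod_insert (by simp [hij, hik]), Finset.prod_insert (by simp [hjk]),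
      Finset.prod_singleton, hΨi, hΨj, hΨk]
    ring
  have hprodI : (∏ m ∈ ({i, j, k} : Finset (Fin M)), ∫ ω, Ψ m (V m ω) ∂μ)
      = (∫ ω, φ (V i ω) ∂μ) * (∫ ω, ψ (V j ω) ∂μ) * ∫ ω, χ (V k ω) ∂μ := by
    rw [hs, Finset.prod_insert (by simp [hij, hik]), Finset.prod_insert (by simp [hjk]),
      Finset.prod_singleton, hΨi, hΨj, hΨk]
    ring
  constructor
  · exact h1.congr (Eventually.of_forall fun ω => (hprod ω))
  · rw [← hprodI, ← h2]
    exact integral_congr_ae (Eventually.of_forall fun ω => (hprod ω).symm)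

lemma aux_prod4 (hmeas : ∀ m, Measurable (V m))
    (hindep : iIndepFun V μ)
    {i j k l : Fin M} (hij : i ≠ j) (hik : i ≠ k) (hil : i ≠ l)
    (hjk : j ≠ k) (hjl : j ≠ l) (hkl : k ≠ l)
    {φ ψ χ ξ : ℝ × ℝ → ℝ} (hφ : Measurable φ) (hψ : Measurable ψ) (hχ : Measurable χ)
    (hξ : Measurable ξ)
    (hφi : Integrable (fun ω => φ (V i ω)) μ) (hψj : Integrable (fun ω => ψ (V j ω)) μ)
    (hχk : Integrable (fun ω => χ (V k ω)) μ) (hξl : Integrable (fun ω => ξ (V l ω)) μ) :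
    Integrable (fun ω => φ (V i ω) * ψ (V j ω) * χ (V k ω) * ξ (V l ω)) μ ∧
      ∫ ω, φ (V i ω) * ψ (V j ω) * χ (V k ω) * ξ (V l ω) ∂μ
        = (∫ ω, φ (V i ω) ∂μ) * (∫ ω, ψ (V j ω) ∂μ) * (∫ ω, χ (V k ω) ∂μ)
            * ∫ ω, ξ (V l ω) ∂μ := by
  classical
  set Ψ : Fin M → ℝ × ℝ → ℝ :=
    fun m => if m = i then φ else if m = j then ψ else if m = k then χ else ξ with hΨ
  have hΨm : ∀ m, Measurable (Ψ m) := by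
    intro m; simp only [hΨ]; split_ifs <;> assumption
  have hind : iIndepFun
      (fun m => fun ω => Ψ m (V m ω)) μ := hindep.comp Ψ hΨm
  have hXm : ∀ m, Measurable (fun ω => Ψ m (V m ω)) := fun m => (hΨm m).comp (hmeas m)
  have hs : ({i, j, k, l} : Finset (Fin M))
      = insert i (insert j (insert k ({l} : Finset (Fin M)))) := rfl
  have hΨi : Ψ i = φ := by simp [hΨ]
  have hΨj : Ψ j = ψ := by simp [hΨ, hij.symm]
  have hΨk : Ψ k = χ := by simp [hΨ, hik.symm, hjk.symm]
  have hΨl : Ψ l = ξ := by simp [hΨ, hil.symm, hjl.symm, hkl.symm]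
  have hint : ∀ m ∈ ({i, j, k, l} : Finset (Fin M)), Integrable (fun ω => Ψ m (V m ω)) μ := by
    intro m hm
    simp only [Finset.mem_insert, Finset.mem_singleton] at hm
    rcases hm with rfl | rfl | rfl | rfl
    · rw [hΨi]; exact hφi
    · rw [hΨj]; exact hψj
    · rw [hΨk]; exact hχk
    · rw [hΨl]; exact hξl
  obtain ⟨h1, h2⟩ := aux_indep_prod hind hXm {i, j, k, l} hint
  have hni : i ∉ (insert j (insert k ({l} : Finset (Fin M)))) := by simp [hij, hik, hil]
  have hnj : j ∉ (insert k ({l} : Finset (Fin M))) := by simp [hjk, hjl]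
  have hnk : k ∉ ({l} : Finset (Fin M)) := by simp [hkl]
  have hprod : ∀ ω, (∏ m ∈ ({i, j, k, l} : Finset (Fin M)), Ψ m (V m ω))
      = φ (V i ω) * ψ (V j ω) * χ (V k ω) * ξ (V l ω) := by
    intro ω
    rw [hs, Finset.prod_insert hni, Finset.prod_insert hnj, Finset.prod_insert hnk,
      Finset.prod_singleton, hΨi, hΨj, hΨk, hΨl]
    ring
  have hprodI : (∏ m ∈ ({i, j, k, l} : Finset (Fin M)), ∫ ω, Ψ m (V m ω) ∂μ)
      = (∫ ω, φ (V i ω) ∂μ) * (∫ ω, ψ (V j ω) ∂μ) * (∫ ω, χ (V k ω) ∂μ)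
          * ∫ ω, ξ (V l ω) ∂μ := by
    rw [hs, Finset.prod_insert hni, Finset.prod_insert hnj, Finset.prod_insert hnk,
      Finset.prod_singleton, hΨi, hΨj, hΨk, hΨl]
    ring
  constructor
  · exact h1.congr (Eventually.of_forall fun ω => (hprod ω))
  · rw [← hprodI, ← h2]
    exact integral_congr_ae (Eventually.of_forall fun ω => (hprod ω).symm)

lemma aux_memLp_mul {X Y : Ω → ℝ} (hX : MemLp X 4 μ) (hY : MemLp Y 4 μ) :
    MemLp (fun ω => X ω * Y ω) 2 μ := by
  have h : (1 : ℝ≥0∞) / 2 = 1 / 4 + 1 / 4 := by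
    rw [ENNReal.div_add_div_same,
      show (4:ℝ≥0∞) = 2*2 by norm_num, ENNReal.div_eq_div_iff] <;> norm_num
  haveI : ENNReal.HolderTriple 4 4 2 := ⟨by simpa [one_div] using h.symm⟩
  exact hY.smul hX

lemma aux_int_mul {X Y : Ω → ℝ} (hX : MemLp X 2 μ) (hY : MemLp Y 2 μ) :
    Integrable (fun ω => X ω * Y ω) μ := by
  have h : (1 : ℝ≥0∞) / 1 = 1 / 2 + 1 / 2 := by
    rw [ENNReal.div_add_div_same, ENNReal.div_eq_div_iff] <;> norm_num
  haveI : ENNReal.HolderTriple 2 2 1 := ⟨by simpa [one_div] using h.symm⟩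
  have := MemLp.smul (r := 1) hY hX
  rw [← memLp_one_iff_integrable]
  exact this

lemma aux_id_integral {α : Type*} [MeasurableSpace α] {f g : Ω → α}
    (hf : Measurable f) (hg : Measurable g) (h : μ.map f = μ.map g)
    {ψ : α → ℝ} (hψ : Measurable ψ) :
    ∫ ω, ψ (f ω) ∂μ = ∫ ω, ψ (g ω) ∂μ := by
  rw [← integral_map hf.aemeasurable hψ.aestronglyMeasurable, h,
    integral_map hg.aemeasurable hψ.aestronglyMeasurable]

lemma aux_id_memLp {α : Type*} [MeasurableSpace α] {f g : Ω → α}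
    (hf : Measurable f) (hg : Measurable g) (h : μ.map f = μ.map g)
    {ψ : α → ℝ} (hψ : Measurable ψ) {p : ℝ≥0∞}
    (hmem : MemLp (fun ω => ψ (g ω)) p μ) : MemLp (fun ω => ψ (f ω)) p μ := by
  have h1 : MemLp ψ p (μ.map g) := by
    rw [memLp_map_measure_iff hψ.aestronglyMeasurable hg.aemeasurable]
    exact hmem
  rw [← h] at h1
  exact (memLp_map_measure_iff hψ.aestronglyMeasurable hf.aemeasurable).1 h1

lemma aux_CS {X Y : Ω → ℝ} (hX : MemLp X 2 μ) (hY : MemLp Y 2 μ)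
    (hXn : 0 ≤ᵐ[μ] X) (hYn : 0 ≤ᵐ[μ] Y) :
    ∫ ω, X ω * Y ω ∂μ ≤ Real.sqrt ((∫ ω, X ω ^ 2 ∂μ) * ∫ ω, Y ω ^ 2 ∂μ) := by
  have hconj : Real.HolderConjugate 2 2 := Real.HolderConjugate.two_two
  have h2 : (ENNReal.ofReal (2:ℝ)) = 2 := by norm_num
  have := integral_mul_le_Lp_mul_Lq_of_nonneg hconj hXn hYn (by rw [h2]; exact hX)
    (by rw [h2]; exact hY)
  refine this.trans (le_of_eq ?_)
  rw [Real.sqrt_mul (integral_nonneg fun ω => sq_nonneg _), Real.sqrt_eq_rpow,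
    Real.sqrt_eq_rpow]
  norm_num

lemma aux_sum_ite {M : ℕ} (m : Fin M) (X Y : ℝ) :
    (∑ n : Fin M, if n = m then X else Y) = X + ((M:ℝ) - 1) * Y := by
  have h : ∀ n : Fin M, (if n = m then X else Y) = Y + (if n = m then X - Y else 0) := by
    intro n; split_ifs <;> ring
  simp only [h, Finset.sum_add_distrib, Finset.sum_const, card_univ, Fintype.card_fin,
    Finset.sum_ite_eq' Finset.univ m, Finset.mem_univ, if_true, nsmul_eq_mul]
  ring

lemma aux_sum_ite0 {M : ℕ} (m : Fin M) (X : ℝ) :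
    (∑ n : Fin M, if n = m then X else 0) = X := by
  rw [Finset.sum_ite_eq' Finset.univ m (fun _ => X)]; simp

lemma aux_sum_ite2 {M : ℕ} {m n : Fin M} (h : m ≠ n) (X Y : ℝ) :
    (∑ p : Fin M, if p = m then X else if p = n then Y else 0) = X + Y := by
  have hp : ∀ p : Fin M, (if p = m then X else if p = n then Y else 0)
      = (if p = m then X else 0) + (if p = n then Y else 0) := by
    intro p
    rcases eq_or_ne p m with rfl | h1
    · rw [if_pos rfl, if_pos rfl, if_neg h, add_zero]
    · rw [if_neg h1, if_neg h1, zero_add]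
  simp only [hp, Finset.sum_add_distrib, Finset.sum_ite_eq' Finset.univ,
    Finset.mem_univ, if_true]

end AUX

section CORE
set_option linter.unusedSectionVars false
set_option maxHeartbeats 1600000

variable {Ω : Type*} [MeasurableSpace Ω]

lemma aux_core (μ : Measure Ω) [IsProbabilityMeasure μ]
    (M : ℕ) (hM : 2 ≤ M) (V : Fin M → Ω → ℝ × ℝ)
    (hmeas : ∀ m, Measurable (V m))
    (hindep : iIndepFun V μ)
    (i0 : Fin M)
    (f g : ℝ × ℝ → ℝ) (hf : Measurable f) (hg : Measurable g)
    (hF4 : ∀ m, MemLp (fun ω => f (V m ω)) 4 μ)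
    (hG4 : ∀ m, MemLp (fun ω => g (V m ω)) 4 μ)
    (hEF : ∀ m, ∫ ω, f (V m ω) ∂μ = 0) (hEG : ∀ m, ∫ ω, g (V m ω) ∂μ = 0)
    (C va vb q22 : ℝ)
    (hCv : ∀ m, ∫ ω, f (V m ω) * g (V m ω) ∂μ = C)
    (hva : ∀ m, ∫ ω, f (V m ω) * f (V m ω) ∂μ = va)
    (hvb : ∀ m, ∫ ω, g (V m ω) * g (V m ω) ∂μ = vb)
    (hq22 : ∀ m, ∫ ω, (f (V m ω) * g (V m ω)) * (f (V m ω) * g (V m ω)) ∂μ = q22) :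
    variance (fun ω => ((M:ℝ) - 1)⁻¹ *
        ((∑ m, f (V m ω) * g (V m ω))
          - (M:ℝ)⁻¹ * ((∑ m, f (V m ω)) * (∑ m, g (V m ω))))) μ
      ≤ ((M:ℝ) - 1)⁻¹ *
          Real.sqrt ((∫ ω, f (V i0 ω) ^ 4 ∂μ) * ∫ ω, g (V i0 ω) ^ 4 ∂μ) := by
  classical
  have hM2 : (2:ℝ) ≤ (M:ℝ) := by exact_mod_cast hM
  have hMpos : (0:ℝ) < M := by linarith
  have hM0 : (M:ℝ) ≠ 0 := ne_of_gt hMpos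
  have hM1pos : (0:ℝ) < (M:ℝ) - 1 := by linarith
  have hM1 : (M:ℝ) - 1 ≠ 0 := ne_of_gt hM1pos
  -- MemLp and integrability library
  have hF2 : ∀ m, MemLp (fun ω => f (V m ω)) 2 μ :=
    fun m => (hF4 m).mono_exponent (by norm_num)
  have hG2 : ∀ m, MemLp (fun ω => g (V m ω)) 2 μ :=
    fun m => (hG4 m).mono_exponent (by norm_num)
  have hFG2 : ∀ m, MemLp (fun ω => f (V m ω) * g (V m ω)) 2 μ :=
    fun m => aux_memLp_mul (hF4 m) (hG4 m)
  have hFF2 : ∀ m, MemLp (fun ω => f (V m ω) * f (V m ω)) 2 μ :=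
    fun m => aux_memLp_mul (hF4 m) (hF4 m)
  have hGG2 : ∀ m, MemLp (fun ω => g (V m ω) * g (V m ω)) 2 μ :=
    fun m => aux_memLp_mul (hG4 m) (hG4 m)
  have intf : ∀ m, Integrable (fun ω => f (V m ω)) μ := fun m => (hF2 m).integrable one_le_two
  have intg : ∀ m, Integrable (fun ω => g (V m ω)) μ := fun m => (hG2 m).integrable one_le_two
  have intfg : ∀ m, Integrable (fun ω => f (V m ω) * g (V m ω)) μ :=
    fun m => (hFG2 m).integrable one_le_two
  have int_fgf : ∀ m, Integrable (fun ω => f (V m ω) * g (V m ω) * f (V m ω)) μ :=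
    fun m => aux_int_mul (hFG2 m) (hF2 m)
  have int_fgg : ∀ m, Integrable (fun ω => f (V m ω) * g (V m ω) * g (V m ω)) μ :=
    fun m => aux_int_mul (hFG2 m) (hG2 m)
  have int_ffg : ∀ m, Integrable (fun ω => f (V m ω) * f (V m ω) * g (V m ω)) μ :=
    fun m => aux_int_mul (hFF2 m) (hG2 m)
  have intff : ∀ m, Integrable (fun ω => f (V m ω) * f (V m ω)) μ :=
    fun m => (hFF2 m).integrable one_le_two
  have intgg : ∀ m, Integrable (fun ω => g (V m ω) * g (V m ω)) μ :=
    fun m => (hGG2 m).integrable one_le_two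
  have mfg : Measurable (fun w : ℝ × ℝ => f w * g w) := hf.mul hg
  have mff : Measurable (fun w : ℝ × ℝ => f w * f w) := hf.mul hf
  have mgg : Measurable (fun w : ℝ × ℝ => g w * g w) := hg.mul hg
  have mfgf : Measurable (fun w : ℝ × ℝ => f w * g w * f w) := mfg.mul hf
  have mfgg : Measurable (fun w : ℝ × ℝ => f w * g w * g w) := mfg.mul hg
  have mffg : Measurable (fun w : ℝ × ℝ => f w * f w * g w) := mff.mul hg
  -- pattern expectations
  have P1 : ∀ a : Fin M,
      ∫ ω, (f (V a ω) * f (V a ω)) * (g (V a ω) * g (V a ω)) ∂μ = q22 := by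
    intro a
    calc ∫ ω, (f (V a ω) * f (V a ω)) * (g (V a ω) * g (V a ω)) ∂μ
        = ∫ ω, (f (V a ω) * g (V a ω)) * (f (V a ω) * g (V a ω)) ∂μ :=
          integral_congr_ae (Eventually.of_forall fun ω => by ring)
      _ = q22 := hq22 a
  have P2 : ∀ a c : Fin M, a ≠ c →
      ∫ ω, (f (V a ω) * f (V a ω)) * (g (V c ω) * g (V c ω)) ∂μ = va * vb := by
    intro a c hac
    rw [(aux_prod2 hindep hac mff mgg (intff a) (intgg c)).2, hva a, hvb c]
  have P3 : ∀ a c : Fin M, a ≠ c →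
      ∫ ω, (f (V a ω) * f (V a ω)) * (g (V a ω) * g (V c ω)) ∂μ = 0 := by
    intro a c hac
    calc ∫ ω, (f (V a ω) * f (V a ω)) * (g (V a ω) * g (V c ω)) ∂μ
        = ∫ ω, (f (V a ω) * f (V a ω) * g (V a ω)) * g (V c ω) ∂μ :=
          integral_congr_ae (Eventually.of_forall fun ω => by ring)
      _ = 0 := by
          rw [(aux_prod2 hindep hac mffg hg (int_ffg a) (intg c)).2, hEG c, mul_zero]
  have P4 : ∀ a c : Fin M, a ≠ c →
      ∫ ω, (f (V a ω) * f (V a ω)) * (g (V c ω) * g (V a ω)) ∂μ = 0 := by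
    intro a c hac
    calc ∫ ω, (f (V a ω) * f (V a ω)) * (g (V c ω) * g (V a ω)) ∂μ
        = ∫ ω, (f (V a ω) * f (V a ω) * g (V a ω)) * g (V c ω) ∂μ :=
          integral_congr_ae (Eventually.of_forall fun ω => by ring)
      _ = 0 := by
          rw [(aux_prod2 hindep hac mffg hg (int_ffg a) (intg c)).2, hEG c, mul_zero]
  have P5 : ∀ a b c : Fin M, a ≠ b → a ≠ c → b ≠ c →
      ∫ ω, (f (V a ω) * f (V a ω)) * (g (V b ω) * g (V c ω)) ∂μ = 0 := by
    intro a b c hab hac hbc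
    calc ∫ ω, (f (V a ω) * f (V a ω)) * (g (V b ω) * g (V c ω)) ∂μ
        = ∫ ω, (f (V a ω) * f (V a ω)) * g (V b ω) * g (V c ω) ∂μ :=
          integral_congr_ae (Eventually.of_forall fun ω => by ring)
      _ = 0 := by
          rw [(aux_prod3 hmeas hindep hab hac hbc mff hg hg (intff a) (intg b) (intg c)).2,
            hEG b]
          ring
  have P6 : ∀ a b : Fin M, a ≠ b →
      ∫ ω, (f (V a ω) * f (V b ω)) * (g (V a ω) * g (V b ω)) ∂μ = C ^ 2 := by
    intro a b hab
    calc ∫ ω, (f (V a ω) * f (V b ω)) * (g (V a ω) * g (V b ω)) ∂μ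
        = ∫ ω, (f (V a ω) * g (V a ω)) * (f (V b ω) * g (V b ω)) ∂μ :=
          integral_congr_ae (Eventually.of_forall fun ω => by ring)
      _ = C ^ 2 := by
          rw [(aux_prod2 hindep hab mfg mfg (intfg a) (intfg b)).2, hCv a, hCv b]; ring
  have P7 : ∀ a b : Fin M, a ≠ b →
      ∫ ω, (f (V a ω) * f (V b ω)) * (g (V a ω) * g (V a ω)) ∂μ = 0 := by
    intro a b hab
    calc ∫ ω, (f (V a ω) * f (V b ω)) * (g (V a ω) * g (V a ω)) ∂μ
        = ∫ ω, (f (V a ω) * g (V a ω) * g (V a ω)) * f (V b ω) ∂μ :=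
          integral_congr_ae (Eventually.of_forall fun ω => by ring)
      _ = 0 := by
          rw [(aux_prod2 hindep hab mfgg hf (int_fgg a) (intf b)).2, hEF b, mul_zero]
  have P8 : ∀ a b c : Fin M, a ≠ b → a ≠ c → b ≠ c →
      ∫ ω, (f (V a ω) * f (V b ω)) * (g (V a ω) * g (V c ω)) ∂μ = 0 := by
    intro a b c hab hac hbc
    calc ∫ ω, (f (V a ω) * f (V b ω)) * (g (V a ω) * g (V c ω)) ∂μ
        = ∫ ω, (f (V a ω) * g (V a ω)) * f (V b ω) * g (V c ω) ∂μ :=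
          integral_congr_ae (Eventually.of_forall fun ω => by ring)
      _ = 0 := by
          rw [(aux_prod3 hmeas hindep hab hac hbc mfg hf hg (intfg a) (intf b) (intg c)).2,
            hEF b]
          ring
  have P9 : ∀ a b : Fin M, a ≠ b →
      ∫ ω, (f (V a ω) * f (V b ω)) * (g (V b ω) * g (V a ω)) ∂μ = C ^ 2 := by
    intro a b hab
    calc ∫ ω, (f (V a ω) * f (V b ω)) * (g (V b ω) * g (V a ω)) ∂μ
        = ∫ ω, (f (V a ω) * g (V a ω)) * (f (V b ω) * g (V b ω)) ∂μ :=
          integral_congr_ae (Eventually.of_forall fun ω => by ring)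
      _ = C ^ 2 := by
          rw [(aux_prod2 hindep hab mfg mfg (intfg a) (intfg b)).2, hCv a, hCv b]; ring
  have P10 : ∀ a b : Fin M, a ≠ b →
      ∫ ω, (f (V a ω) * f (V b ω)) * (g (V b ω) * g (V b ω)) ∂μ = 0 := by
    intro a b hab
    calc ∫ ω, (f (V a ω) * f (V b ω)) * (g (V b ω) * g (V b ω)) ∂μ
        = ∫ ω, f (V a ω) * (f (V b ω) * g (V b ω) * g (V b ω)) ∂μ :=
          integral_congr_ae (Eventually.of_forall fun ω => by ring)
      _ = 0 := by
          rw [(aux_prod2 hindep hab hf mfgg (intf a) (int_fgg b)).2, hEF a, zero_mul]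
  have P11 : ∀ a b c : Fin M, a ≠ b → a ≠ c → b ≠ c →
      ∫ ω, (f (V a ω) * f (V b ω)) * (g (V b ω) * g (V c ω)) ∂μ = 0 := by
    intro a b c hab hac hbc
    calc ∫ ω, (f (V a ω) * f (V b ω)) * (g (V b ω) * g (V c ω)) ∂μ
        = ∫ ω, f (V a ω) * (f (V b ω) * g (V b ω)) * g (V c ω) ∂μ :=
          integral_congr_ae (Eventually.of_forall fun ω => by ring)
      _ = 0 := by
          rw [(aux_prod3 hmeas hindep hab hac hbc hf mfg hg (intf a) (intfg b) (intg c)).2,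
            hEF a]
          ring
  have P12 : ∀ a b c : Fin M, a ≠ b → a ≠ c → b ≠ c →
      ∫ ω, (f (V a ω) * f (V b ω)) * (g (V c ω) * g (V c ω)) ∂μ = 0 := by
    intro a b c hab hac hbc
    calc ∫ ω, (f (V a ω) * f (V b ω)) * (g (V c ω) * g (V c ω)) ∂μ
        = ∫ ω, f (V a ω) * f (V b ω) * (g (V c ω) * g (V c ω)) ∂μ :=
          integral_congr_ae (Eventually.of_forall fun ω => by ring)
      _ = 0 := by
          rw [(aux_prod3 hmeas hindep hab hac hbc hf hf mgg (intf a) (intf b) (intgg c)).2,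
            hEF a]
          ring
  have P13 : ∀ a b c : Fin M, a ≠ b → a ≠ c → b ≠ c →
      ∫ ω, (f (V a ω) * f (V b ω)) * (g (V c ω) * g (V a ω)) ∂μ = 0 := by
    intro a b c hab hac hbc
    calc ∫ ω, (f (V a ω) * f (V b ω)) * (g (V c ω) * g (V a ω)) ∂μ
        = ∫ ω, (f (V a ω) * g (V a ω)) * f (V b ω) * g (V c ω) ∂μ :=
          integral_congr_ae (Eventually.of_forall fun ω => by ring)
      _ = 0 := by
          rw [(aux_prod3 hmeas hindep hab hac hbc mfg hf hg (intfg a) (intf b) (intg c)).2,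
            hEF b]
          ring
  have P14 : ∀ a b c : Fin M, a ≠ b → a ≠ c → b ≠ c →
      ∫ ω, (f (V a ω) * f (V b ω)) * (g (V c ω) * g (V b ω)) ∂μ = 0 := by
    intro a b c hab hac hbc
    calc ∫ ω, (f (V a ω) * f (V b ω)) * (g (V c ω) * g (V b ω)) ∂μ
        = ∫ ω, f (V a ω) * (f (V b ω) * g (V b ω)) * g (V c ω) ∂μ :=
          integral_congr_ae (Eventually.of_forall fun ω => by ring)
      _ = 0 := by
          rw [(aux_prod3 hmeas hindep hab hac hbc hf mfg hg (intf a) (intfg b) (intg c)).2,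
            hEF a]
          ring
  have P15 : ∀ a b c d : Fin M, a ≠ b → a ≠ c → a ≠ d → b ≠ c → b ≠ d → c ≠ d →
      ∫ ω, (f (V a ω) * f (V b ω)) * (g (V c ω) * g (V d ω)) ∂μ = 0 := by
    intro a b c d hab hac had hbc hbd hcd
    calc ∫ ω, (f (V a ω) * f (V b ω)) * (g (V c ω) * g (V d ω)) ∂μ
        = ∫ ω, f (V a ω) * f (V b ω) * g (V c ω) * g (V d ω) ∂μ :=
          integral_congr_ae (Eventually.of_forall fun ω => by ring)
      _ = 0 := by
          rw [(aux_prod4 hmeas hindep hab hac had hbc hbd hcd hf hf hg hg (intf a) (intf b)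
            (intg c) (intg d)).2, hEF a]
          ring
  have Q2 : ∀ a c : Fin M, a ≠ c →
      ∫ ω, (f (V a ω) * g (V a ω)) * (f (V a ω) * g (V c ω)) ∂μ = 0 := by
    intro a c hac
    calc ∫ ω, (f (V a ω) * g (V a ω)) * (f (V a ω) * g (V c ω)) ∂μ
        = ∫ ω, (f (V a ω) * g (V a ω) * f (V a ω)) * g (V c ω) ∂μ :=
          integral_congr_ae (Eventually.of_forall fun ω => by ring)
      _ = 0 := by
          rw [(aux_prod2 hindep hac mfgf hg (int_fgf a) (intg c)).2, hEG c, mul_zero]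
  have Q3 : ∀ a b : Fin M, a ≠ b →
      ∫ ω, (f (V a ω) * g (V a ω)) * (f (V b ω) * g (V b ω)) ∂μ = C ^ 2 := by
    intro a b hab
    rw [(aux_prod2 hindep hab mfg mfg (intfg a) (intfg b)).2, hCv a, hCv b]; ring
  have Q4 : ∀ a b : Fin M, a ≠ b →
      ∫ ω, (f (V a ω) * g (V a ω)) * (f (V b ω) * g (V a ω)) ∂μ = 0 := by
    intro a b hab
    calc ∫ ω, (f (V a ω) * g (V a ω)) * (f (V b ω) * g (V a ω)) ∂μ
        = ∫ ω, (f (V a ω) * g (V a ω) * g (V a ω)) * f (V b ω) ∂μ :=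
          integral_congr_ae (Eventually.of_forall fun ω => by ring)
      _ = 0 := by
          rw [(aux_prod2 hindep hab mfgg hf (int_fgg a) (intf b)).2, hEF b, mul_zero]
  have Q5 : ∀ a b c : Fin M, a ≠ b → a ≠ c → b ≠ c →
      ∫ ω, (f (V a ω) * g (V a ω)) * (f (V b ω) * g (V c ω)) ∂μ = 0 := by
    intro a b c hab hac hbc
    calc ∫ ω, (f (V a ω) * g (V a ω)) * (f (V b ω) * g (V c ω)) ∂μ
        = ∫ ω, (f (V a ω) * g (V a ω)) * f (V b ω) * g (V c ω) ∂μ :=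
          integral_congr_ae (Eventually.of_forall fun ω => by ring)
      _ = 0 := by
          rw [(aux_prod3 hmeas hindep hab hac hbc mfg hf hg (intfg a) (intf b) (intg c)).2,
            hEF b]
          ring
  -- termwise values
  have e1 : ∀ m n : Fin M, ∫ ω, f (V m ω) * g (V n ω) ∂μ = if n = m then C else 0 := by
    intro m n
    rcases eq_or_ne n m with h | h
    · rw [if_pos h]; simp only [h]; exact hCv m
    · rw [if_neg h, (aux_prod2 hindep (Ne.symm h) hf hg (intf m) (intg n)).2, hEF m, zero_mul]
  have e2 : ∀ m n : Fin M,
      ∫ ω, (f (V m ω) * g (V m ω)) * (f (V n ω) * g (V n ω)) ∂μ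
        = if n = m then q22 else C ^ 2 := by
    intro m n
    rcases eq_or_ne n m with h | h
    · rw [if_pos h]; simp only [h]; exact hq22 m
    · rw [if_neg h]; exact Q3 m n (Ne.symm h)
  have e3 : ∀ m p q : Fin M,
      ∫ ω, (f (V m ω) * g (V m ω)) * (f (V p ω) * g (V q ω)) ∂μ
        = if p = m then (if q = m then q22 else 0) else (if q = p then C ^ 2 else 0) := by
    intro m p q
    by_cases hpm : p = m
    · rw [if_pos hpm]
      by_cases hqm : q = m
      · rw [if_pos hqm]; simp only [hpm, hqm]; exact hq22 m
      · rw [if_neg hqm]; simp only [hpm]; exact Q2 m q (Ne.symm hqm)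
    · rw [if_neg hpm]
      by_cases hqp : q = p
      · rw [if_pos hqp]; simp only [hqp]; exact Q3 m p (Ne.symm hpm)
      · rw [if_neg hqp]
        by_cases hqm : q = m
        · simp only [hqm]; exact Q4 m p (Ne.symm hpm)
        · exact Q5 m p q (Ne.symm hpm) (Ne.symm hqm) (Ne.symm hqp)
  have e4 : ∀ m n p q : Fin M,
      ∫ ω, (f (V m ω) * f (V n ω)) * (g (V p ω) * g (V q ω)) ∂μ
        = if n = m then (if q = p then (if p = m then q22 else va * vb) else 0)
          else (if p = m then (if q = n then C ^ 2 else 0)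
            else if p = n then (if q = m then C ^ 2 else 0) else 0) := by
    intro m n p q
    by_cases hnm : n = m
    · rw [if_pos hnm]; simp only [hnm]
      by_cases hqp : q = p
      · rw [if_pos hqp]; simp only [hqp]
        by_cases hpm : p = m
        · rw [if_pos hpm]; simp only [hpm]; exact P1 m
        · rw [if_neg hpm]; exact P2 m p (Ne.symm hpm)
      · rw [if_neg hqp]
        by_cases hpm : p = m
        · simp only [hpm]
          exact P3 m q (fun h => hqp (h.symm.trans hpm.symm))
        · by_cases hqm : q = m
          · simp only [hqm]; exact P4 m p (Ne.symm hpm)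
          · exact P5 m p q (Ne.symm hpm) (Ne.symm hqm) (Ne.symm hqp)
    · rw [if_neg hnm]
      by_cases hpm : p = m
      · rw [if_pos hpm]; simp only [hpm]
        by_cases hqn : q = n
        · rw [if_pos hqn]; simp only [hqn]; exact P6 m n (Ne.symm hnm)
        · rw [if_neg hqn]
          by_cases hqm : q = m
          · simp only [hqm]; exact P7 m n (Ne.symm hnm)
          · exact P8 m n q (Ne.symm hnm) (Ne.symm hqm) (Ne.symm hqn)
      · rw [if_neg hpm]
        by_cases hpn : p = n
        · rw [if_pos hpn]; simp only [hpn]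
          by_cases hqm : q = m
          · rw [if_pos hqm]; simp only [hqm]; exact P9 m n (Ne.symm hnm)
          · rw [if_neg hqm]
            by_cases hqn : q = n
            · simp only [hqn]; exact P10 m n (Ne.symm hnm)
            · exact P11 m n q (Ne.symm hnm) (Ne.symm hqm) (Ne.symm hqn)
        · rw [if_neg hpn]
          by_cases hqp : q = p
          · simp only [hqp]; exact P12 m n p (Ne.symm hnm) (Ne.symm hpm) (Ne.symm hpn)
          · by_cases hqm : q = m
            · simp only [hqm]; exact P13 m n p (Ne.symm hnm) (Ne.symm hpm) (Ne.symm hpn)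
            · by_cases hqn : q = n
              · simp only [hqn]; exact P14 m n p (Ne.symm hnm) (Ne.symm hpm) (Ne.symm hpn)
              · exact P15 m n p q (Ne.symm hnm) (Ne.symm hpm) (Ne.symm hqm) (Ne.symm hpn)
                  (Ne.symm hqn) (Ne.symm hqp)
  -- sums of termwise values
  have sum_e1 : ∀ m, (∑ n, ∫ ω, f (V m ω) * g (V n ω) ∂μ) = C := by
    intro m
    rw [Finset.sum_congr rfl (fun n _ => e1 m n), aux_sum_ite0 m C]
  have sum_e2 : ∀ m, (∑ n, ∫ ω, (f (V m ω) * g (V m ω)) * (f (V n ω) * g (V n ω)) ∂μ)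
      = q22 + ((M:ℝ) - 1) * C ^ 2 := by
    intro m
    rw [Finset.sum_congr rfl (fun n _ => e2 m n), aux_sum_ite m q22 (C ^ 2)]
  have sum_e3q : ∀ m p, (∑ q, ∫ ω, (f (V m ω) * g (V m ω)) * (f (V p ω) * g (V q ω)) ∂μ)
      = if p = m then q22 else C ^ 2 := by
    intro m p
    rw [Finset.sum_congr rfl (fun q _ => e3 m p q)]
    by_cases hpm : p = m
    · simp only [hpm, eq_self_iff_true, if_true]
      exact aux_sum_ite0 m q22
    · simp only [if_neg hpm]
      exact aux_sum_ite0 p (C ^ 2)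
  have sum_e3 : ∀ m, (∑ p, ∑ q, ∫ ω, (f (V m ω) * g (V m ω)) * (f (V p ω) * g (V q ω)) ∂μ)
      = q22 + ((M:ℝ) - 1) * C ^ 2 := by
    intro m
    rw [Finset.sum_congr rfl (fun p _ => sum_e3q m p), aux_sum_ite m q22 (C ^ 2)]
  have sum_e4q : ∀ m n p,
      (∑ q, ∫ ω, (f (V m ω) * f (V n ω)) * (g (V p ω) * g (V q ω)) ∂μ)
        = if n = m then (if p = m then q22 else va * vb)
          else (if p = m then C ^ 2 else if p = n then C ^ 2 else 0) := by
    intro m n p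
    rw [Finset.sum_congr rfl (fun q _ => e4 m n p q)]
    by_cases hnm : n = m
    · simp only [hnm, eq_self_iff_true, if_true]
      exact aux_sum_ite0 p _
    · simp only [if_neg hnm]
      by_cases hpm : p = m
      · simp only [hpm, eq_self_iff_true, if_true]
        exact aux_sum_ite0 n _
      · simp only [if_neg hpm]
        by_cases hpn : p = n
        · simp only [hpn, eq_self_iff_true, if_true]
          exact aux_sum_ite0 m _
        · simp only [if_neg hpn]
          simp
  have sum_e4p : ∀ m n,
      (∑ p, ∑ q, ∫ ω, (f (V m ω) * f (V n ω)) * (g (V p ω) * g (V q ω)) ∂μ)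
        = if n = m then q22 + ((M:ℝ) - 1) * (va * vb) else 2 * C ^ 2 := by
    intro m n
    rw [Finset.sum_congr rfl (fun p _ => sum_e4q m n p)]
    by_cases hnm : n = m
    · simp only [hnm, eq_self_iff_true, if_true]
      exact aux_sum_ite m q22 (va * vb)
    · simp only [if_neg hnm]
      rw [aux_sum_ite2 (fun h => hnm h.symm) (C ^ 2) (C ^ 2)]
      ring
  have sum_e4 : (∑ m, ∑ n, ∑ p, ∑ q,
      ∫ ω, (f (V m ω) * f (V n ω)) * (g (V p ω) * g (V q ω)) ∂μ)
        = (M:ℝ) * (q22 + ((M:ℝ) - 1) * (va * vb) + ((M:ℝ) - 1) * (2 * C ^ 2)) := by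
    rw [Finset.sum_congr rfl (fun m _ => Finset.sum_congr rfl (fun n _ => sum_e4p m n)),
      Finset.sum_congr rfl (fun m _ => aux_sum_ite m (q22 + ((M:ℝ) - 1) * (va * vb))
        (2 * C ^ 2)),
      Finset.sum_const, card_univ, Fintype.card_fin, nsmul_eq_mul]
  -- integrability of the aggregates
  have intSum : Integrable (fun ω => ∑ m, f (V m ω) * g (V m ω)) μ :=
    integrable_finset_sum univ (fun m _ => intfg m)
  have hU4 : MemLp (fun ω => ∑ m, f (V m ω)) 4 μ :=
    memLp_finset_sum univ (fun m (_ : m ∈ univ) => hF4 m)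
  have hT4 : MemLp (fun ω => ∑ m, g (V m ω)) 4 μ :=
    memLp_finset_sum univ (fun m (_ : m ∈ univ) => hG4 m)
  have hS2 : MemLp (fun ω => ∑ m, f (V m ω) * g (V m ω)) 2 μ :=
    memLp_finset_sum univ (fun m (_ : m ∈ univ) => hFG2 m)
  have hUT2 : MemLp (fun ω => (∑ m, f (V m ω)) * (∑ m, g (V m ω))) 2 μ :=
    aux_memLp_mul hU4 hT4
  have intUT : Integrable (fun ω => (∑ m, f (V m ω)) * (∑ m, g (V m ω))) μ :=
    hUT2.integrable one_le_two
  have intSS : Integrable (fun ω =>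
      (∑ m, f (V m ω) * g (V m ω)) * (∑ m, f (V m ω) * g (V m ω))) μ :=
    aux_int_mul hS2 hS2
  have intSUT : Integrable (fun ω =>
      (∑ m, f (V m ω) * g (V m ω)) * ((∑ m, f (V m ω)) * (∑ m, g (V m ω)))) μ :=
    aux_int_mul hS2 hUT2
  have intUTUT : Integrable (fun ω =>
      ((∑ m, f (V m ω)) * (∑ m, g (V m ω))) * ((∑ m, f (V m ω)) * (∑ m, g (V m ω)))) μ :=
    aux_int_mul hUT2 hUT2
  -- first moments
  have ES : ∫ ω, (∑ m, f (V m ω) * g (V m ω)) ∂μ = (M:ℝ) * C := by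
    rw [integral_finset_sum univ (fun m _ => intfg m),
      Finset.sum_congr rfl (fun m _ => hCv m), Finset.sum_const, card_univ, Fintype.card_fin,
      nsmul_eq_mul]
  have EUT : ∫ ω, (∑ m, f (V m ω)) * (∑ m, g (V m ω)) ∂μ = (M:ℝ) * C := by
    have h0 : (fun ω => (∑ m, f (V m ω)) * (∑ m, g (V m ω)))
        = fun ω => ∑ m, ∑ n, f (V m ω) * g (V n ω) := by
      funext ω
      rw [Finset.sum_mul_sum univ univ (fun m => f (V m ω)) (fun n => g (V n ω))]
    rw [h0, integral_finset_sum univ (fun m _ =>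
        integrable_finset_sum univ (fun n _ => aux_int_mul (hF2 m) (hG2 n))),
      Finset.sum_congr rfl (fun m _ => integral_finset_sum univ
        (fun n _ => aux_int_mul (hF2 m) (hG2 n))),
      Finset.sum_congr rfl (fun m _ => sum_e1 m), Finset.sum_const, card_univ,
      Fintype.card_fin, nsmul_eq_mul]
  -- second moments
  have EA : ∫ ω, (∑ m, f (V m ω) * g (V m ω)) * (∑ m, f (V m ω) * g (V m ω)) ∂μ
      = (M:ℝ) * (q22 + ((M:ℝ) - 1) * C ^ 2) := by
    have h0 : (fun ω => (∑ m, f (V m ω) * g (V m ω)) * (∑ m, f (V m ω) * g (V m ω)))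
        = fun ω => ∑ m, ∑ n, (f (V m ω) * g (V m ω)) * (f (V n ω) * g (V n ω)) := by
      funext ω
      rw [Finset.sum_mul_sum univ univ (fun m => f (V m ω) * g (V m ω))
        (fun n => f (V n ω) * g (V n ω))]
    have hint : ∀ m n : Fin M, Integrable
        (fun ω => (f (V m ω) * g (V m ω)) * (f (V n ω) * g (V n ω))) μ :=
      fun m n => aux_int_mul (hFG2 m) (hFG2 n)
    rw [h0, integral_finset_sum univ (fun m _ =>
        integrable_finset_sum univ (fun n _ => hint m n)),
      Finset.sum_congr rfl (fun m _ => integral_finset_sum univ (fun n _ => hint m n)),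
      Finset.sum_congr rfl (fun m _ => sum_e2 m), Finset.sum_const, card_univ,
      Fintype.card_fin, nsmul_eq_mul]
  have EB : ∫ ω, (∑ m, f (V m ω) * g (V m ω)) * ((∑ m, f (V m ω)) * (∑ m, g (V m ω))) ∂μ
      = (M:ℝ) * (q22 + ((M:ℝ) - 1) * C ^ 2) := by
    have h0 : (fun ω => (∑ m, f (V m ω) * g (V m ω)) * ((∑ m, f (V m ω)) * (∑ m, g (V m ω))))
        = fun ω => ∑ m, ∑ p, ∑ q, (f (V m ω) * g (V m ω)) * (f (V p ω) * g (V q ω)) := by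
      funext ω
      rw [Finset.sum_mul_sum univ univ (fun p => f (V p ω)) (fun q => g (V q ω)),
        Finset.sum_mul]
      refine Finset.sum_congr rfl fun m _ => ?_
      rw [Finset.mul_sum]
      refine Finset.sum_congr rfl fun p _ => ?_
      rw [Finset.mul_sum]
    have hint : ∀ m p q : Fin M, Integrable
        (fun ω => (f (V m ω) * g (V m ω)) * (f (V p ω) * g (V q ω))) μ :=
      fun m p q => aux_int_mul (hFG2 m) (aux_memLp_mul (hF4 p) (hG4 q))
    rw [h0, integral_finset_sum univ (fun m _ => integrable_finset_sum univ (fun p _ =>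
        integrable_finset_sum univ (fun q _ => hint m p q))),
      Finset.sum_congr rfl (fun m _ => integral_finset_sum univ (fun p _ =>
        integrable_finset_sum univ (fun q _ => hint m p q))),
      Finset.sum_congr rfl (fun m _ => Finset.sum_congr rfl (fun p _ =>
        integral_finset_sum univ (fun q _ => hint m p q))),
      Finset.sum_congr rfl (fun m _ => sum_e3 m), Finset.sum_const, card_univ,
      Fintype.card_fin, nsmul_eq_mul]
  have EC : ∫ ω, ((∑ m, f (V m ω)) * (∑ m, g (V m ω)))
        * ((∑ m, f (V m ω)) * (∑ m, g (V m ω))) ∂μ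
      = (M:ℝ) * (q22 + ((M:ℝ) - 1) * (va * vb) + ((M:ℝ) - 1) * (2 * C ^ 2)) := by
    have h0 : (fun ω => ((∑ m, f (V m ω)) * (∑ m, g (V m ω)))
          * ((∑ m, f (V m ω)) * (∑ m, g (V m ω))))
        = fun ω => ∑ m, ∑ n, ∑ p, ∑ q, (f (V m ω) * f (V n ω)) * (g (V p ω) * g (V q ω)) := by
      funext ω
      have h1 : ((∑ m, f (V m ω)) * (∑ m, g (V m ω)))
            * ((∑ m, f (V m ω)) * (∑ m, g (V m ω)))
          = ((∑ m, f (V m ω)) * (∑ m, f (V m ω))) * ((∑ m, g (V m ω)) * (∑ m, g (V m ω))) := by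
        ring
      rw [h1, Finset.sum_mul_sum univ univ (fun m => f (V m ω)) (fun n => f (V n ω)),
        Finset.sum_mul_sum univ univ (fun p => g (V p ω)) (fun q => g (V q ω)),
        Finset.sum_mul]
      refine Finset.sum_congr rfl fun m _ => ?_
      rw [Finset.sum_mul]
      refine Finset.sum_congr rfl fun n _ => ?_
      rw [Finset.mul_sum]
      refine Finset.sum_congr rfl fun p _ => ?_
      rw [Finset.mul_sum]
    have hint : ∀ m n p q : Fin M, Integrable
        (fun ω => (f (V m ω) * f (V n ω)) * (g (V p ω) * g (V q ω))) μ :=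
      fun m n p q => aux_int_mul (aux_memLp_mul (hF4 m) (hF4 n)) (aux_memLp_mul (hG4 p) (hG4 q))
    rw [h0, integral_finset_sum univ (fun m _ => integrable_finset_sum univ (fun n _ =>
        integrable_finset_sum univ (fun p _ =>
          integrable_finset_sum univ (fun q _ => hint m n p q)))),
      Finset.sum_congr rfl (fun m _ => integral_finset_sum univ (fun n _ =>
        integrable_finset_sum univ (fun p _ =>
          integrable_finset_sum univ (fun q _ => hint m n p q)))),
      Finset.sum_congr rfl (fun m _ => Finset.sum_congr rfl (fun n _ =>
        integral_finset_sum univ (fun p _ =>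
          integrable_finset_sum univ (fun q _ => hint m n p q)))),
      Finset.sum_congr rfl (fun m _ => Finset.sum_congr rfl (fun n _ =>
        Finset.sum_congr rfl (fun p _ =>
          integral_finset_sum univ (fun q _ => hint m n p q)))),
      sum_e4]
  -- the estimator K
  have hK2 : MemLp (fun ω => (∑ m, f (V m ω) * g (V m ω))
      - (M:ℝ)⁻¹ * ((∑ m, f (V m ω)) * (∑ m, g (V m ω)))) 2 μ :=
    hS2.sub (hUT2.const_mul _)
  have hEK : ∫ ω, ((∑ m, f (V m ω) * g (V m ω))
      - (M:ℝ)⁻¹ * ((∑ m, f (V m ω)) * (∑ m, g (V m ω)))) ∂μ = ((M:ℝ) - 1) * C := by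
    rw [integral_sub intSum (intUT.const_mul _), integral_const_mul, ES, EUT]
    field_simp
  have hK2val : ∫ ω, ((∑ m, f (V m ω) * g (V m ω))
        - (M:ℝ)⁻¹ * ((∑ m, f (V m ω)) * (∑ m, g (V m ω)))) ^ 2 ∂μ
      = (M:ℝ) * (q22 + ((M:ℝ) - 1) * C ^ 2)
        - 2 * (M:ℝ)⁻¹ * ((M:ℝ) * (q22 + ((M:ℝ) - 1) * C ^ 2))
        + (M:ℝ)⁻¹ * (M:ℝ)⁻¹
          * ((M:ℝ) * (q22 + ((M:ℝ) - 1) * (va * vb) + ((M:ℝ) - 1) * (2 * C ^ 2))) := by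
    have h0 : (fun ω => ((∑ m, f (V m ω) * g (V m ω))
          - (M:ℝ)⁻¹ * ((∑ m, f (V m ω)) * (∑ m, g (V m ω)))) ^ 2)
        = fun ω => ((∑ m, f (V m ω) * g (V m ω)) * (∑ m, f (V m ω) * g (V m ω))
            - 2 * (M:ℝ)⁻¹ * ((∑ m, f (V m ω) * g (V m ω))
              * ((∑ m, f (V m ω)) * (∑ m, g (V m ω)))))
          + (M:ℝ)⁻¹ * (M:ℝ)⁻¹ * (((∑ m, f (V m ω)) * (∑ m, g (V m ω)))
              * ((∑ m, f (V m ω)) * (∑ m, g (V m ω)))) := by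
      funext ω
      ring
    have i3 : Integrable (fun ω => 2 * (M:ℝ)⁻¹ * ((∑ m, f (V m ω) * g (V m ω))
        * ((∑ m, f (V m ω)) * (∑ m, g (V m ω))))) μ := intSUT.const_mul _
    have i2 : Integrable (fun ω => (M:ℝ)⁻¹ * (M:ℝ)⁻¹ * (((∑ m, f (V m ω)) * (∑ m, g (V m ω)))
        * ((∑ m, f (V m ω)) * (∑ m, g (V m ω))))) μ := intUTUT.const_mul _
    have i1 : Integrable (fun ω => (∑ m, f (V m ω) * g (V m ω)) * (∑ m, f (V m ω) * g (V m ω))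
        - 2 * (M:ℝ)⁻¹ * ((∑ m, f (V m ω) * g (V m ω))
          * ((∑ m, f (V m ω)) * (∑ m, g (V m ω))))) μ := intSS.sub i3
    rw [h0, integral_add i1 i2, integral_sub intSS i3, integral_const_mul, integral_const_mul,
      EA, EB, EC]
  -- Cauchy-Schwarz bounds
  have hm4f : ∫ ω, (f (V i0 ω) * f (V i0 ω)) ^ 2 ∂μ = ∫ ω, f (V i0 ω) ^ 4 ∂μ :=
    integral_congr_ae (Eventually.of_forall fun ω => by ring)
  have hm4g : ∫ ω, (g (V i0 ω) * g (V i0 ω)) ^ 2 ∂μ = ∫ ω, g (V i0 ω) ^ 4 ∂μ :=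
    integral_congr_ae (Eventually.of_forall fun ω => by ring)
  have hm4f_nonneg : 0 ≤ ∫ ω, f (V i0 ω) ^ 4 ∂μ := integral_nonneg fun ω => by positivity
  have hACS : q22 ≤ Real.sqrt ((∫ ω, f (V i0 ω) ^ 4 ∂μ) * ∫ ω, g (V i0 ω) ^ 4 ∂μ) := by
    have h := aux_CS (hFF2 i0) (hGG2 i0) (ae_of_all μ fun ω => mul_self_nonneg _)
      (ae_of_all μ fun ω => mul_self_nonneg _)
    rw [hm4f, hm4g] at h
    calc q22 = ∫ ω, (f (V i0 ω) * f (V i0 ω)) * (g (V i0 ω) * g (V i0 ω)) ∂μ := (P1 i0).symm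
      _ ≤ _ := h
  have hvaR : va ≤ Real.sqrt (∫ ω, f (V i0 ω) ^ 4 ∂μ) := by
    have h := aux_CS (hFF2 i0) (memLp_const (1:ℝ)) (ae_of_all μ fun ω => mul_self_nonneg _)
      (ae_of_all μ fun ω => by norm_num)
    have h1 : ∫ ω, (f (V i0 ω) * f (V i0 ω)) * (1:ℝ) ∂μ = va := by
      rw [← hva i0]
      exact integral_congr_ae (Eventually.of_forall fun ω => by ring)
    have h2 : ∫ (_ : Ω), ((1:ℝ)) ^ 2 ∂μ = 1 := by simp
    rw [h1, hm4f, h2, mul_one] at h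
    exact h
  have hvbR : vb ≤ Real.sqrt (∫ ω, g (V i0 ω) ^ 4 ∂μ) := by
    have h := aux_CS (hGG2 i0) (memLp_const (1:ℝ)) (ae_of_all μ fun ω => mul_self_nonneg _)
      (ae_of_all μ fun ω => by norm_num)
    have h1 : ∫ ω, (g (V i0 ω) * g (V i0 ω)) * (1:ℝ) ∂μ = vb := by
      rw [← hvb i0]
      exact integral_congr_ae (Eventually.of_forall fun ω => by ring)
    have h2 : ∫ (_ : Ω), ((1:ℝ)) ^ 2 ∂μ = 1 := by simp
    rw [h1, hm4g, h2, mul_one] at h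
    exact h
  have hvb_nonneg : 0 ≤ vb := by
    rw [← hvb i0]
    exact integral_nonneg fun ω => mul_self_nonneg _
  have hBR : va * vb ≤ Real.sqrt ((∫ ω, f (V i0 ω) ^ 4 ∂μ) * ∫ ω, g (V i0 ω) ^ 4 ∂μ) := by
    calc va * vb ≤ Real.sqrt (∫ ω, f (V i0 ω) ^ 4 ∂μ)
          * Real.sqrt (∫ ω, g (V i0 ω) ^ 4 ∂μ) :=
        mul_le_mul hvaR hvbR hvb_nonneg (Real.sqrt_nonneg _)
      _ = _ := (Real.sqrt_mul hm4f_nonneg _).symm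
  -- final assembly
  rw [variance_const_mul, variance_eq_sub hK2]
  simp only [Pi.pow_apply]
  rw [hK2val, hEK]
  have hden : (0:ℝ) < (M:ℝ) * ((M:ℝ) - 1) := mul_pos hMpos hM1pos
  have h1 : q22 / (M:ℝ)
      ≤ Real.sqrt ((∫ ω, f (V i0 ω) ^ 4 ∂μ) * ∫ ω, g (V i0 ω) ^ 4 ∂μ) / (M:ℝ) :=
    div_le_div_of_nonneg_right hACS hMpos.le
  have h2 : (va * vb) / ((M:ℝ) * ((M:ℝ) - 1))
      ≤ Real.sqrt ((∫ ω, f (V i0 ω) ^ 4 ∂μ) * ∫ ω, g (V i0 ω) ^ 4 ∂μ)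
          / ((M:ℝ) * ((M:ℝ) - 1)) :=
    div_le_div_of_nonneg_right hBR hden.le
  have h3 : (0:ℝ) ≤ ((M:ℝ) - 2) * C ^ 2 / ((M:ℝ) * ((M:ℝ) - 1)) :=
    div_nonneg (mul_nonneg (by linarith) (sq_nonneg C)) (le_of_lt hden)
  have h4 : Real.sqrt ((∫ ω, f (V i0 ω) ^ 4 ∂μ) * ∫ ω, g (V i0 ω) ^ 4 ∂μ) / (M:ℝ)
      + Real.sqrt ((∫ ω, f (V i0 ω) ^ 4 ∂μ) * ∫ ω, g (V i0 ω) ^ 4 ∂μ)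
          / ((M:ℝ) * ((M:ℝ) - 1))
      = ((M:ℝ) - 1)⁻¹
          * Real.sqrt ((∫ ω, f (V i0 ω) ^ 4 ∂μ) * ∫ ω, g (V i0 ω) ^ 4 ∂μ) := by
    field_simp
    ring
  have key : (((M:ℝ) - 1)⁻¹) ^ 2 * (((M:ℝ) * (q22 + ((M:ℝ) - 1) * C ^ 2)
        - 2 * (M:ℝ)⁻¹ * ((M:ℝ) * (q22 + ((M:ℝ) - 1) * C ^ 2))
        + (M:ℝ)⁻¹ * (M:ℝ)⁻¹
          * ((M:ℝ) * (q22 + ((M:ℝ) - 1) * (va * vb) + ((M:ℝ) - 1) * (2 * C ^ 2))))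
        - (((M:ℝ) - 1) * C) ^ 2)
      = q22 / (M:ℝ) + (va * vb) / ((M:ℝ) * ((M:ℝ) - 1))
        - ((M:ℝ) - 2) * C ^ 2 / ((M:ℝ) * ((M:ℝ) - 1)) := by
    field_simp
    ring
  rw [key]
  linarith [h1, h2, h3, h4]

end CORE



/-- Upper bound on the variance of the sample covariance of an i.i.d. sample of pairs with
finite fourth moments: `Var(Ĉ) ≤ (M−1)⁻¹ √(M₄(W) M₄(W'))`. -/
theorem variance_sample_covariance_le
    {Ω : Type*} [MeasurableSpace Ω] (μ : Measure Ω) [IsProbabilityMeasure μ]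
    (M : ℕ) (hM : 2 ≤ M) (V : Fin M → Ω → ℝ × ℝ)
    (hmeas : ∀ m, Measurable (V m))
    (hindep : iIndepFun V μ)
    (hident : ∀ m, μ.map (V m) = μ.map (V ⟨0, by omega⟩))
    (hL4 : MemLp (fun ω => (V ⟨0, by omega⟩ ω).1) 4 μ)
    (hL4' : MemLp (fun ω => (V ⟨0, by omega⟩ ω).2) 4 μ) :
    variance (fun ω => ((M : ℝ) / ((M : ℝ) - 1)) *
        ((M : ℝ)⁻¹ * ∑ m, (V m ω).1 * (V m ω).2
          - ((M : ℝ)⁻¹ * ∑ m, (V m ω).1) * ((M : ℝ)⁻¹ * ∑ m, (V m ω).2))) μ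
      ≤ ((M : ℝ) - 1)⁻¹ *
          Real.sqrt
            ((∫ ω, ((V ⟨0, by omega⟩ ω).1 - ∫ ω', (V ⟨0, by omega⟩ ω').1 ∂μ) ^ 4 ∂μ) *
              ∫ ω, ((V ⟨0, by omega⟩ ω).2 - ∫ ω', (V ⟨0, by omega⟩ ω').2 ∂μ) ^ 4 ∂μ) := by
  classical
  have hM0 : 0 < M := by omega
  have hM2 : (2:ℝ) ≤ (M:ℝ) := by exact_mod_cast hM
  have hMne : (M:ℝ) ≠ 0 := by positivity
  have hM1 : (M:ℝ) - 1 ≠ 0 := by intro h; nlinarith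
  set a := ∫ ω, (V (⟨0, hM0⟩ : Fin M) ω).1 ∂μ with ha
  set b := ∫ ω, (V (⟨0, hM0⟩ : Fin M) ω).2 ∂μ with hb
  have hident' : ∀ m, μ.map (V m) = μ.map (V (⟨0, hM0⟩ : Fin M)) := hident
  have hL40 : MemLp (fun ω => (V (⟨0, hM0⟩ : Fin M) ω).1) 4 μ := hL4
  have hL40' : MemLp (fun ω => (V (⟨0, hM0⟩ : Fin M) ω).2) 4 μ := hL4'
  have mf : Measurable (fun w : ℝ × ℝ => w.1 - a) := measurable_fst.sub measurable_const
  have mg : Measurable (fun w : ℝ × ℝ => w.2 - b) := measurable_snd.sub measurable_const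
  have hF40 : MemLp (fun ω => (V (⟨0, hM0⟩ : Fin M) ω).1 - a) 4 μ :=
    hL40.sub (memLp_const a)
  have hG40 : MemLp (fun ω => (V (⟨0, hM0⟩ : Fin M) ω).2 - b) 4 μ :=
    hL40'.sub (memLp_const b)
  have hF4 : ∀ m, MemLp (fun ω => (V m ω).1 - a) 4 μ :=
    fun m => aux_id_memLp (hmeas m) (hmeas _) (hident' m) mf hF40
  have hG4 : ∀ m, MemLp (fun ω => (V m ω).2 - b) 4 μ :=
    fun m => aux_id_memLp (hmeas m) (hmeas _) (hident' m) mg hG40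
  have hEF : ∀ m, ∫ ω, ((V m ω).1 - a) ∂μ = 0 := by
    intro m
    have h1 : ∫ ω, ((V m ω).1 - a) ∂μ
        = ∫ ω, ((V (⟨0, hM0⟩ : Fin M) ω).1 - a) ∂μ :=
      aux_id_integral (hmeas m) (hmeas _) (hident' m) mf
    rw [h1, integral_sub (hL40.integrable (by norm_num)) (integrable_const a),
      integral_const]
    simp only [measure_univ, probReal_univ, ENNReal.toReal_one, smul_eq_mul, one_mul]
    rw [← ha]
    exact sub_self a
  have hEG : ∀ m, ∫ ω, ((V m ω).2 - b) ∂μ = 0 := by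
    intro m
    have h1 : ∫ ω, ((V m ω).2 - b) ∂μ
        = ∫ ω, ((V (⟨0, hM0⟩ : Fin M) ω).2 - b) ∂μ :=
      aux_id_integral (hmeas m) (hmeas _) (hident' m) mg
    rw [h1, integral_sub (hL40'.integrable (by norm_num)) (integrable_const b),
      integral_const]
    simp only [measure_univ, probReal_univ, ENNReal.toReal_one, smul_eq_mul, one_mul]
    rw [← hb]
    exact sub_self b
  have hCv : ∀ m, ∫ ω, ((V m ω).1 - a) * ((V m ω).2 - b) ∂μ
      = ∫ ω, ((V (⟨0, hM0⟩ : Fin M) ω).1 - a) * ((V (⟨0, hM0⟩ : Fin M) ω).2 - b) ∂μ :=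
    fun m => aux_id_integral (hmeas m) (hmeas _) (hident' m) (mf.mul mg)
  have hva : ∀ m, ∫ ω, ((V m ω).1 - a) * ((V m ω).1 - a) ∂μ
      = ∫ ω, ((V (⟨0, hM0⟩ : Fin M) ω).1 - a) * ((V (⟨0, hM0⟩ : Fin M) ω).1 - a) ∂μ :=
    fun m => aux_id_integral (hmeas m) (hmeas _) (hident' m) (mf.mul mf)
  have hvb : ∀ m, ∫ ω, ((V m ω).2 - b) * ((V m ω).2 - b) ∂μ
      = ∫ ω, ((V (⟨0, hM0⟩ : Fin M) ω).2 - b) * ((V (⟨0, hM0⟩ : Fin M) ω).2 - b) ∂μ :=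
    fun m => aux_id_integral (hmeas m) (hmeas _) (hident' m) (mg.mul mg)
  have hq22 : ∀ m, ∫ ω, (((V m ω).1 - a) * ((V m ω).2 - b))
        * (((V m ω).1 - a) * ((V m ω).2 - b)) ∂μ
      = ∫ ω, (((V (⟨0, hM0⟩ : Fin M) ω).1 - a) * ((V (⟨0, hM0⟩ : Fin M) ω).2 - b))
        * (((V (⟨0, hM0⟩ : Fin M) ω).1 - a) * ((V (⟨0, hM0⟩ : Fin M) ω).2 - b)) ∂μ :=
    fun m => aux_id_integral (hmeas m) (hmeas _) (hident' m) ((mf.mul mg).mul (mf.mul mg))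
  have hfun : (fun ω => ((M : ℝ) / ((M : ℝ) - 1)) *
        ((M : ℝ)⁻¹ * ∑ m, (V m ω).1 * (V m ω).2
          - ((M : ℝ)⁻¹ * ∑ m, (V m ω).1) * ((M : ℝ)⁻¹ * ∑ m, (V m ω).2)))
      = fun ω => ((M:ℝ) - 1)⁻¹ *
        ((∑ m, ((V m ω).1 - a) * ((V m ω).2 - b))
          - (M:ℝ)⁻¹ * ((∑ m, ((V m ω).1 - a)) * (∑ m, ((V m ω).2 - b)))) := by
    funext ω
    have h1 : ∑ m, ((V m ω).1 - a) * ((V m ω).2 - b)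
        = (∑ m, (V m ω).1 * (V m ω).2) - b * (∑ m, (V m ω).1)
          - a * (∑ m, (V m ω).2) + (M:ℝ) * (a * b) := by
      rw [Finset.sum_congr rfl (fun m _ =>
        (by ring : ((V m ω).1 - a) * ((V m ω).2 - b)
          = (V m ω).1 * (V m ω).2 - b * (V m ω).1 - a * (V m ω).2 + a * b)),
        Finset.sum_add_distrib, Finset.sum_sub_distrib, Finset.sum_sub_distrib,
        ← Finset.mul_sum, ← Finset.mul_sum, Finset.sum_const, card_univ, Fintype.card_fin,
        nsmul_eq_mul]
    have h2 : ∑ m, ((V m ω).1 - a) = (∑ m, (V m ω).1) - (M:ℝ) * a := by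
      rw [Finset.sum_sub_distrib, Finset.sum_const, card_univ, Fintype.card_fin, nsmul_eq_mul]
    have h3 : ∑ m, ((V m ω).2 - b) = (∑ m, (V m ω).2) - (M:ℝ) * b := by
      rw [Finset.sum_sub_distrib, Finset.sum_const, card_univ, Fintype.card_fin, nsmul_eq_mul]
    rw [h1, h2, h3]
    field_simp
    ring
  rw [hfun]
  exact aux_core μ M hM V hmeas hindep ⟨0, hM0⟩ (fun w => w.1 - a) (fun w => w.2 - b)
    mf mg hF4 hG4 hEF hEG _ _ _ _ hCv hva hvb hq22
end

section
/- Let w₁,…,w_N ≥ 0 be weights, let I ⊆ {1,…,N} with Σ_{i∉I} wᵢ ≤ p and |1 − Σ_{i∈I} wᵢ| ≤ p for some p ≥ 0, and let V : Θ → ℝ be a Lipschitz function with constant κ_v on a set of diameter D, with V bounded by V_max ≥ 0. Suppose design points θ₁,…,θ_N ∈ Θ satisfy ‖θ − θᵢ‖ ≤ r for all i ∈ I, for some prediction point θ ∈ Θ and r ≥ 0. Then |Σ_{i=1}^N wᵢ V(θᵢ) − V(θ)| ≤ (1+p) κ_v r + p κ_v D + 2 p V_max. -/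
/-!
Split the smoother's error into three parts: the weighted local deviations
`Σ_{i ∈ I} wᵢ (V θᵢ - V θ)`, bounded by Lipschitz continuity and `Σ_{i ∈ I} wᵢ ≤ 1 + p`; the
mass defect `(Σ_{i ∈ I} wᵢ - 1) V θ`; and the tail `Σ_{i ∉ I} wᵢ V θᵢ`. The last two are each at
most `p V_max`, and the diameter term `p κ_v D` is slack.
-/

open Finset

section WeightedSums

variable {ι R : Type*} [CommRing R]

theorem sum_mul_sub_eq_local_add_defect_add_tail [Fintype ι] [DecidableEq ι] (w f : ι → R)
    (c : R) (I : Finset ι) :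
    ∑ i, w i * f i - c
      = ∑ i ∈ I, w i * (f i - c) + (∑ i ∈ I, w i - 1) * c + ∑ i ∈ Iᶜ, w i * f i := by
  rw [← sum_add_sum_compl I]
  simp only [mul_sub, sum_sub_distrib, ← sum_mul]
  ring

theorem abs_sum_mul_le_sum_mul [LinearOrder R] [IsStrictOrderedRing R] {s : Finset ι}
    {w f : ι → R} {M : R} (hw : ∀ i ∈ s, 0 ≤ w i) (hf : ∀ i ∈ s, |f i| ≤ M) :
    |∑ i ∈ s, w i * f i| ≤ (∑ i ∈ s, w i) * M := by
  calc |∑ i ∈ s, w i * f i| ≤ ∑ i ∈ s, |w i * f i| := abs_sum_le_sum_abs _ _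
    _ ≤ ∑ i ∈ s, w i * M := sum_le_sum fun i hi => by
        rw [abs_mul, abs_of_nonneg (hw i hi)]
        exact mul_le_mul_of_nonneg_left (hf i hi) (hw i hi)
    _ = (∑ i ∈ s, w i) * M := (sum_mul _ _ _).symm

end WeightedSums

theorem linear_smoother_bias_bound_general
    {E : Type*} [NormedAddCommGroup E] {N : ℕ} (Θ : Set E)
    (w : Fin N → ℝ) (hw : ∀ i, 0 ≤ w i)
    (I : Finset (Fin N)) (p : ℝ)
    (hout : ∑ i ∈ Iᶜ, w i ≤ p)
    (hin : |1 - ∑ i ∈ I, w i| ≤ p)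
    (V : E → ℝ) (κv : ℝ) (hκv : 0 ≤ κv)
    (hLip : ∀ x ∈ Θ, ∀ y ∈ Θ, |V x - V y| ≤ κv * ‖x - y‖)
    (D : ℝ) (hD : ∀ x ∈ Θ, ∀ y ∈ Θ, ‖x - y‖ ≤ D)
    (Vmax : ℝ) (hVbd : ∀ x ∈ Θ, |V x| ≤ Vmax)
    (θ : E) (hθ : θ ∈ Θ) (θs : Fin N → E) (hθs : ∀ i, θs i ∈ Θ)
    (r : ℝ) (hr : 0 ≤ r) (hnear : ∀ i ∈ I, ‖θ - θs i‖ ≤ r) :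
    |(∑ i, w i * V (θs i)) - V θ|
      ≤ (1 + p) * κv * r + p * κv * D + 2 * p * Vmax := by
  have hp : 0 ≤ p := (abs_nonneg _).trans hin
  have hVmax : 0 ≤ Vmax := (abs_nonneg _).trans (hVbd θ hθ)
  have hpκD : 0 ≤ p * κv * D :=
    mul_nonneg (mul_nonneg hp hκv) ((norm_nonneg _).trans (hD θ hθ θ hθ))
  have hmassI : ∑ i ∈ I, w i ≤ 1 + p := by linarith [(abs_le.mp hin).1]
  have hlocal : ∀ i ∈ I, |V (θs i) - V θ| ≤ κv * r := fun i hi =>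
    (hLip _ (hθs i) _ hθ).trans <|
      mul_le_mul_of_nonneg_left (by rw [norm_sub_rev]; exact hnear i hi) hκv
  have hlocalSum : |∑ i ∈ I, w i * (V (θs i) - V θ)| ≤ (1 + p) * (κv * r) :=
    (abs_sum_mul_le_sum_mul (fun i _ => hw i) hlocal).trans
      (mul_le_mul_of_nonneg_right hmassI (by positivity))
  have hdefect : |(∑ i ∈ I, w i - 1) * V θ| ≤ p * Vmax := by
    rw [abs_mul, abs_sub_comm]
    exact mul_le_mul hin (hVbd θ hθ) (abs_nonneg _) hp
  have htail : |∑ i ∈ Iᶜ, w i * V (θs i)| ≤ p * Vmax :=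
    (abs_sum_mul_le_sum_mul (fun i _ => hw i) (fun i _ => hVbd _ (hθs i))).trans
      (mul_le_mul_of_nonneg_right hout hVmax)
  rw [sum_mul_sub_eq_local_add_defect_add_tail w (fun i => V (θs i)) (V θ) I]
  calc _ ≤ |∑ i ∈ I, w i * (V (θs i) - V θ) + (∑ i ∈ I, w i - 1) * V θ|
          + |∑ i ∈ Iᶜ, w i * V (θs i)| := abs_add_le _ _
    _ ≤ |∑ i ∈ I, w i * (V (θs i) - V θ)| + |(∑ i ∈ I, w i - 1) * V θ|
          + |∑ i ∈ Iᶜ, w i * V (θs i)| := by gcongr; exact abs_add_le _ _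
    _ ≤ _ := by linarith

/-- Bias bound for a linear smoother: if the nonnegative weights place mass at most `p`
outside the index set `I`, total weight on `I` within `p` of `1`, the design points
indexed by `I` lie within distance `r` of the prediction point `θ`, `V` is `κ_v`-Lipschitz
on a set `Θ` of diameter at most `D` and bounded by `V_max`, then
`|Σᵢ wᵢ V(θᵢ) − V(θ)| ≤ (1+p) κ_v r + p κ_v D + 2 p V_max`. -/
theorem linear_smoother_bias_bound
    {E : Type*} [NormedAddCommGroup E] {N : ℕ} (Θ : Set E)
    (w : Fin N → ℝ) (hw : ∀ i, 0 ≤ w i)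
    (I : Finset (Fin N)) (p : ℝ) (hp : 0 ≤ p)
    (hout : ∑ i ∈ Iᶜ, w i ≤ p)
    (hin : |1 - ∑ i ∈ I, w i| ≤ p)
    (V : E → ℝ) (κv : ℝ) (hκv : 0 ≤ κv)
    (hLip : ∀ x ∈ Θ, ∀ y ∈ Θ, |V x - V y| ≤ κv * ‖x - y‖)
    (D : ℝ) (hD : ∀ x ∈ Θ, ∀ y ∈ Θ, ‖x - y‖ ≤ D)
    (Vmax : ℝ) (hVmax : 0 ≤ Vmax) (hVbd : ∀ x ∈ Θ, |V x| ≤ Vmax)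
    (θ : E) (hθ : θ ∈ Θ) (θs : Fin N → E) (hθs : ∀ i, θs i ∈ Θ)
    (r : ℝ) (hr : 0 ≤ r) (hnear : ∀ i ∈ I, ‖θ - θs i‖ ≤ r) :
    |(∑ i, w i * V (θs i)) - V θ|
      ≤ (1 + p) * κv * r + p * κv * D + 2 * p * Vmax :=
  linear_smoother_bias_bound_general Θ w hw I p hout hin V κv hκv hLip D hD Vmax hVbd θ hθ θs hθs r
    hr hnear
end
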